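/- arXiv:2310.12781 — 4 statements merged into one kernel-verified Lean document; each statement's English description precedes it below -/
import Mathlib

section
/- Let K, n, m be positive integers and let I, I' : {1,...,L} → {0,...,K} be two infection count sequences satisfying |I(t_i) - I'(t_i)| ≤ 1 for all i. If s_i ~ Binomial(n, (I(t_i)+m)/(K+2m)) independently for i = 1,...,L, then for any outcome s = (s_1,...,s_L), the ratio of probabilities p(s | I) / p(s | I') is at most exp(nL/m). In particular, this mechanism satisfies ε-differential privacy with ε = nL/m. -/
open Finset

lemma sir_step (m x y : ℝ) (hm : 0 < m) (hy : m ≤ y) (hxy : x ≤ y + 1) :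
    x ≤ Real.exp (1 / m) * y := by
  have h1 : 1 ≤ y / m := (one_le_div hm).mpr hy
  have hyy : y + 1 ≤ (1 + 1 / m) * y := by
    have hr : (1 + 1 / m) * y = y + y / m := by ring
    rw [hr]; linarith
  have he : (1 + 1 / m) ≤ Real.exp (1 / m) := by
    have := Real.add_one_le_exp (1 / m)
    linarith
  have hy0 : (0 : ℝ) ≤ y := le_trans hm.le hy
  calc x ≤ (1 + 1 / m) * y := le_trans hxy hyy
    _ ≤ Real.exp (1 / m) * y := mul_le_mul_of_nonneg_right he hy0

/-- DP infection trajectory: the binomial privatization mechanism for the SIR infection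
curve satisfies `ε`-DP with `ε = n * L / m`: for neighboring infection trajectories
(pointwise within 1), the probability ratio is at most `exp (n * L / m)`. -/
theorem sir_mechanism_dp (K n m L : ℕ) (hK : 0 < K) (hn : 0 < n) (hm : 0 < m) (hL : 0 < L)
    (I I' : Fin L → ℕ)
    (hI : ∀ i, I i ≤ K) (hI' : ∀ i, I' i ≤ K)
    (hneighbor : ∀ i, |(I i : ℝ) - (I' i : ℝ)| ≤ 1)
    (s : Fin L → ℕ) (hs : ∀ i, s i ≤ n) :
    (∏ i, (n.choose (s i) : ℝ) * (((I i : ℝ) + m) / ((K : ℝ) + 2 * m)) ^ (s i) *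
        ((((K : ℝ) - I i) + m) / ((K : ℝ) + 2 * m)) ^ (n - s i))
      ≤ Real.exp ((n * L : ℝ) / m) *
        ∏ i, (n.choose (s i) : ℝ) * (((I' i : ℝ) + m) / ((K : ℝ) + 2 * m)) ^ (s i) *
          ((((K : ℝ) - I' i) + m) / ((K : ℝ) + 2 * m)) ^ (n - s i) := by
  have hm' : (0 : ℝ) < m := by exact_mod_cast hm
  have hD : (0 : ℝ) < (K : ℝ) + 2 * m := by positivity
  -- pointwise bound
  have hpt : ∀ i, (n.choose (s i) : ℝ) * (((I i : ℝ) + m) / ((K : ℝ) + 2 * m)) ^ (s i) *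
      ((((K : ℝ) - I i) + m) / ((K : ℝ) + 2 * m)) ^ (n - s i)
      ≤ Real.exp ((n : ℝ) / m) *
        ((n.choose (s i) : ℝ) * (((I' i : ℝ) + m) / ((K : ℝ) + 2 * m)) ^ (s i) *
          ((((K : ℝ) - I' i) + m) / ((K : ℝ) + 2 * m)) ^ (n - s i)) := by
    intro i
    have hab := abs_le.mp (hneighbor i)
    have hIK : (I i : ℝ) ≤ K := by exact_mod_cast hI i
    have hIK' : (I' i : ℝ) ≤ K := by exact_mod_cast hI' i
    have hInn : (0 : ℝ) ≤ (I i : ℝ) := Nat.cast_nonneg _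
    have hInn' : (0 : ℝ) ≤ (I' i : ℝ) := Nat.cast_nonneg _
    have ha : ((I i : ℝ) + m) ≤ Real.exp (1 / m) * ((I' i : ℝ) + m) :=
      sir_step m _ _ hm' (by linarith) (by linarith)
    have hb : (((K : ℝ) - I i) + m) ≤ Real.exp (1 / m) * (((K : ℝ) - I' i) + m) :=
      sir_step m _ _ hm' (by linarith) (by linarith)
    have hA : (((I i : ℝ) + m) / ((K : ℝ) + 2 * m)) ^ (s i)
        ≤ (Real.exp (1 / m) * (((I' i : ℝ) + m) / ((K : ℝ) + 2 * m))) ^ (s i) := by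
      apply pow_le_pow_left₀ (div_nonneg (by linarith) hD.le)
      rw [mul_div_assoc']
      exact div_le_div_of_nonneg_right ha hD.le
    have hB : ((((K : ℝ) - I i) + m) / ((K : ℝ) + 2 * m)) ^ (n - s i)
        ≤ (Real.exp (1 / m) * ((((K : ℝ) - I' i) + m) / ((K : ℝ) + 2 * m))) ^ (n - s i) := by
      apply pow_le_pow_left₀ (div_nonneg (by linarith) hD.le)
      rw [mul_div_assoc']
      exact div_le_div_of_nonneg_right hb hD.le
    have hC : (0 : ℝ) ≤ (n.choose (s i) : ℝ) := Nat.cast_nonneg _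
    calc (n.choose (s i) : ℝ) * (((I i : ℝ) + m) / ((K : ℝ) + 2 * m)) ^ (s i) *
        ((((K : ℝ) - I i) + m) / ((K : ℝ) + 2 * m)) ^ (n - s i)
        ≤ (n.choose (s i) : ℝ) * (Real.exp (1 / m) * (((I' i : ℝ) + m) / ((K : ℝ) + 2 * m))) ^ (s i) *
          (Real.exp (1 / m) * ((((K : ℝ) - I' i) + m) / ((K : ℝ) + 2 * m))) ^ (n - s i) := by
          apply mul_le_mul (mul_le_mul_of_nonneg_left hA hC) hB
            (pow_nonneg (div_nonneg (by linarith) hD.le) _) (by positivity)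
      _ = (Real.exp (1/m)) ^ (s i) * (Real.exp (1/m)) ^ (n - s i) *
          ((n.choose (s i) : ℝ) * (((I' i : ℝ) + m) / ((K : ℝ) + 2 * m)) ^ (s i) *
            ((((K : ℝ) - I' i) + m) / ((K : ℝ) + 2 * m)) ^ (n - s i)) := by
          rw [mul_pow, mul_pow]; ring
      _ = Real.exp ((n : ℝ) / m) *
          ((n.choose (s i) : ℝ) * (((I' i : ℝ) + m) / ((K : ℝ) + 2 * m)) ^ (s i) *
            ((((K : ℝ) - I' i) + m) / ((K : ℝ) + 2 * m)) ^ (n - s i)) := by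
          congr 1
          rw [← Real.exp_nat_mul, ← Real.exp_nat_mul, ← Real.exp_add]
          congr 1
          have : (s i : ℝ) + ((n - s i : ℕ) : ℝ) = (n : ℝ) := by
            have := Nat.add_sub_cancel' (hs i)
            exact_mod_cast congrArg (Nat.cast (R := ℝ)) this
          field_simp
          linarith [this]
    -- end calc
  calc (∏ i, (n.choose (s i) : ℝ) * (((I i : ℝ) + m) / ((K : ℝ) + 2 * m)) ^ (s i) *
        ((((K : ℝ) - I i) + m) / ((K : ℝ) + 2 * m)) ^ (n - s i))
      ≤ ∏ i, Real.exp ((n : ℝ) / m) *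
          ((n.choose (s i) : ℝ) * (((I' i : ℝ) + m) / ((K : ℝ) + 2 * m)) ^ (s i) *
            ((((K : ℝ) - I' i) + m) / ((K : ℝ) + 2 * m)) ^ (n - s i)) := by
        apply Finset.prod_le_prod
        · intro i _
          have hIK : (I i : ℝ) ≤ K := by exact_mod_cast hI i
          have h1 : (0:ℝ) ≤ ((I i : ℝ) + m) / ((K : ℝ) + 2 * m) := by positivity
          have h2 : (0:ℝ) ≤ (((K : ℝ) - I i) + m) / ((K : ℝ) + 2 * m) :=
            div_nonneg (by linarith) hD.le
          positivity
        · intro i _; exact hpt i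
    _ = Real.exp ((n * L : ℝ) / m) *
        ∏ i, (n.choose (s i) : ℝ) * (((I' i : ℝ) + m) / ((K : ℝ) + 2 * m)) ^ (s i) *
          ((((K : ℝ) - I' i) + m) / ((K : ℝ) + 2 * m)) ^ (n - s i) := by
        rw [Finset.prod_mul_distrib, Finset.prod_const, Finset.card_univ, Fintype.card_fin,
          ← Real.exp_nat_mul]
        congr 2
        field_simp
end

section
/- Fix integers n ≥ 1, K ≥ 1, m ≥ 1 and let p = (a+m)/(K+2m) and p' = (a'+m)/(K+2m) where a, a' ∈ {0,...,K} with |a - a'| ≤ 1. Then for every s ∈ {0,...,n}, the ratio of binomial probability masses [C(n,s) p^s (1-p)^{n-s}] / [C(n,s) p'^s (1-p')^{n-s}] is at most ((1+m)/m)^n ≤ exp(n/m). -/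
/-- Ratio of binomial probability masses at neighboring success probabilities
`p = (a+m)/(K+2m)` and `p' = (a'+m)/(K+2m)` with `|a - a'| ≤ 1` is at most
`((1+m)/m)^n ≤ exp(n/m)`. -/
theorem binomial_ratio_bound (n K m a a' : ℕ)
    (hn : 1 ≤ n) (hK : 1 ≤ K) (hm : 1 ≤ m)
    (ha : a ≤ K) (ha' : a' ≤ K) (hnear : |(a : ℝ) - (a' : ℝ)| ≤ 1)
    (s : ℕ) (hs : s ≤ n) :
    (let p : ℝ := ((a : ℝ) + m) / ((K : ℝ) + 2 * m)
     let p' : ℝ := ((a' : ℝ) + m) / ((K : ℝ) + 2 * m)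
     ((n.choose s : ℝ) * p ^ s * (1 - p) ^ (n - s)) /
        ((n.choose s : ℝ) * p' ^ s * (1 - p') ^ (n - s))
       ≤ ((1 + (m : ℝ)) / m) ^ n) ∧
    ((1 + (m : ℝ)) / m) ^ n ≤ Real.exp ((n : ℝ) / m) := by
  have hm0 : (0 : ℝ) < m := by exact_mod_cast hm
  have hK0 : (0 : ℝ) < K := by exact_mod_cast hK
  have hc : (0 : ℝ) < (K : ℝ) + 2 * m := by linarith
  have haR : (a : ℝ) ≤ K := by exact_mod_cast ha
  have ha'R : (a' : ℝ) ≤ K := by exact_mod_cast ha'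
  have ha0 : (0 : ℝ) ≤ a := Nat.cast_nonneg a
  have ha'0 : (0 : ℝ) ≤ a' := Nat.cast_nonneg a'
  have hnear1 : (a : ℝ) ≤ (a' : ℝ) + 1 := by
    have := abs_le.mp hnear; linarith [this.2]
  have hnear2 : (a' : ℝ) ≤ (a : ℝ) + 1 := by
    have := abs_le.mp hnear; linarith [this.1]
  set r : ℝ := (1 + (m : ℝ)) / m with hr
  have hr1 : (1 : ℝ) ≤ r := by
    rw [hr, le_div_iff₀ hm0]; linarith
  have hr0 : (0 : ℝ) ≤ r := by linarith
  constructor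
  · intro p p'
    have hp'0 : 0 < p' := div_pos (by linarith) hc
    have hq'0 : 0 < 1 - p' := by
      rw [sub_pos]
      rw [div_lt_one hc]; linarith
    have hp0 : 0 ≤ p := div_nonneg (by linarith) hc.le
    have hq0 : 0 ≤ 1 - p := by
      rw [sub_nonneg, div_le_one hc]; linarith
    -- key ratio bounds
    have key1 : p / p' ≤ r := by
      rw [div_le_div_iff₀ hp'0 hm0]
      show ((a : ℝ) + m) / ((K : ℝ) + 2 * m) * m ≤
        (1 + (m : ℝ)) * (((a' : ℝ) + m) / ((K : ℝ) + 2 * m))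
      rw [div_mul_eq_mul_div, mul_div_assoc', div_le_div_iff₀ hc hc]
      have base : ((a : ℝ) + m) * m ≤ (1 + (m : ℝ)) * ((a' : ℝ) + m) := by
        nlinarith [mul_le_mul_of_nonneg_right hnear1 hm0.le]
      exact mul_le_mul_of_nonneg_right base hc.le
    have hp : (1 : ℝ) - p = ((K : ℝ) + m - a) / ((K : ℝ) + 2 * m) := by
      show (1 : ℝ) - ((a : ℝ) + m) / ((K : ℝ) + 2 * m) = _
      field_simp
      ring
    have hp' : (1 : ℝ) - p' = ((K : ℝ) + m - a') / ((K : ℝ) + 2 * m) := by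
      show (1 : ℝ) - ((a' : ℝ) + m) / ((K : ℝ) + 2 * m) = _
      field_simp
      ring
    have key2 : (1 - p) / (1 - p') ≤ r := by
      rw [div_le_div_iff₀ hq'0 hm0, hp, hp']
      rw [div_mul_eq_mul_div, mul_div_assoc', div_le_div_iff₀ hc hc]
      have base : ((K : ℝ) + m - a) * m ≤ (1 + (m : ℝ)) * ((K : ℝ) + m - a') := by
        nlinarith [mul_le_mul_of_nonneg_right hnear2 hm0.le]
      exact mul_le_mul_of_nonneg_right base hc.le
    have hC : (0 : ℝ) < (n.choose s : ℝ) := by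
      exact_mod_cast Nat.choose_pos hs
    have heq : ((n.choose s : ℝ) * p ^ s * (1 - p) ^ (n - s)) /
        ((n.choose s : ℝ) * p' ^ s * (1 - p') ^ (n - s))
        = (p / p') ^ s * ((1 - p) / (1 - p')) ^ (n - s) := by
      rw [mul_assoc, mul_assoc, mul_div_mul_left _ _ hC.ne',
        ← div_mul_div_comm, ← div_pow, ← div_pow]
    rw [heq]
    calc (p / p') ^ s * ((1 - p) / (1 - p')) ^ (n - s)
        ≤ r ^ s * r ^ (n - s) := by
          apply mul_le_mul
          · exact pow_le_pow_left₀ (div_nonneg hp0 hp'0.le) key1 s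
          · exact pow_le_pow_left₀ (div_nonneg hq0 hq'0.le) key2 (n - s)
          · positivity
          · positivity
      _ = r ^ n := by rw [← pow_add, Nat.add_sub_cancel' hs]
  · have h1 : r ≤ Real.exp (1 / m) := by
      have := Real.add_one_le_exp (1 / (m : ℝ))
      rw [hr]
      calc (1 + (m : ℝ)) / m = 1 / m + 1 := by field_simp
        _ ≤ Real.exp (1 / m) := this
    calc r ^ n ≤ (Real.exp (1 / m)) ^ n := pow_le_pow_left₀ hr0 h1 n
      _ = Real.exp ((n : ℝ) / m) := by
          rw [← Real.exp_nat_mul]; ring_nf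
end

section
/- Consider linear regression data with n subjects and p predictors, where each predictor value and each response is clamped to lie in [-1,1]. Let x̃ ∈ [-1,1]^{n×(p+1)} denote the clamped design matrix with first column all ones, and ỹ ∈ [-1,1]^n the clamped responses. Define the summary statistic s̃(x̃,ỹ) = ((1/n) x̃ᵀ ỹ, (1/n) ỹᵀ ỹ, (1/n) x̃ᵀ x̃). Then the L1-sensitivity of s̃ (as a vector of all entries), with respect to changing one subject's row (x̃_i, ỹ_i), is at most (p² + 3p + 3)/n. -/
open Finset


lemma half_abs_add (a b : ℝ) (ha : |a| ≤ 1) (hb : |b| ≤ 1) :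
    |(a + b) / 2| + |(a - b) / 2| ≤ 1 := by
  rcases abs_le.mp ha with ⟨h1, h2⟩
  rcases abs_le.mp hb with ⟨h3, h4⟩
  rcases abs_cases ((a + b) / 2) with ⟨e1, _⟩ | ⟨e1, _⟩ <;>
    rcases abs_cases ((a - b) / 2) with ⟨e2, _⟩ | ⟨e2, _⟩ <;>
    rw [e1, e2] <;> linarith

lemma row_bound (p : ℕ) (u v : Fin (p + 1) → ℝ) (s t : ℝ)
    (hu : ∀ j, |u j| ≤ 1) (hv : ∀ j, |v j| ≤ 1) (hs : |s| ≤ 1) (ht : |t| ≤ 1) :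
    (∑ j, |u j * s - v j * t|) + |s ^ 2 - t ^ 2| +
      ∑ j, ∑ k, |u j * u k - v j * v k| ≤ (p : ℝ) ^ 2 + 3 * p + 3 := by
  set M : ℝ := ∑ j, |(u j + v j) / 2| with hM
  set D : ℝ := ∑ j, |(u j - v j) / 2| with hD
  set c : ℝ := |(s + t) / 2| with hc
  set e : ℝ := |(s - t) / 2| with he
  have hMnn : 0 ≤ M := Finset.sum_nonneg fun j _ => abs_nonneg _
  have hDnn : 0 ≤ D := Finset.sum_nonneg fun j _ => abs_nonneg _
  have hcnn : 0 ≤ c := abs_nonneg _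
  have henn : 0 ≤ e := abs_nonneg _
  have hPQ : M + D ≤ (p : ℝ) + 1 := by
    have : M + D = ∑ j, (|(u j + v j) / 2| + |(u j - v j) / 2|) := by
      rw [Finset.sum_add_distrib]
    rw [this]
    calc ∑ j : Fin (p+1), (|(u j + v j) / 2| + |(u j - v j) / 2|)
        ≤ ∑ _j : Fin (p+1), (1 : ℝ) :=
          Finset.sum_le_sum fun j _ => half_abs_add _ _ (hu j) (hv j)
      _ = (p : ℝ) + 1 := by simp
  have hce : c + e ≤ 1 := half_abs_add _ _ hs ht
  -- bound the cross sum
  have h1 : (∑ j, |u j * s - v j * t|) ≤ 2 * (M * e + D * c) := by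
    calc (∑ j, |u j * s - v j * t|)
        ≤ ∑ j, 2 * (|(u j + v j) / 2| * e + |(u j - v j) / 2| * c) := by
          apply Finset.sum_le_sum
          intro j _
          have key : u j * s - v j * t =
              2 * ((u j + v j) / 2 * ((s - t) / 2) + (u j - v j) / 2 * ((s + t) / 2)) := by
            ring
          rw [key, abs_mul, abs_two, hc, he]
          have := abs_add_le ((u j + v j) / 2 * ((s - t) / 2)) ((u j - v j) / 2 * ((s + t) / 2))
          rw [abs_mul, abs_mul] at this
          linarith
      _ = 2 * (M * e + D * c) := by
          rw [hM, hD, Finset.sum_mul, Finset.sum_mul, ← Finset.sum_add_distrib,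
            ← Finset.mul_sum]
  have h2 : |s ^ 2 - t ^ 2| ≤ 4 * (c * e) := by
    have key : s ^ 2 - t ^ 2 = 4 * ((s + t) / 2 * ((s - t) / 2)) := by ring
    rw [key, abs_mul, abs_mul]
    norm_num [hc, he]
  have h3 : (∑ j, ∑ k, |u j * u k - v j * v k|) ≤ 4 * (M * D) := by
    calc (∑ j, ∑ k : Fin (p+1), |u j * u k - v j * v k|)
        ≤ ∑ j, ∑ k : Fin (p+1),
            2 * (|(u j + v j) / 2| * |(u k - v k) / 2| +
              |(u j - v j) / 2| * |(u k + v k) / 2|) := by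
          apply Finset.sum_le_sum; intro j _
          apply Finset.sum_le_sum; intro k _
          have key : u j * u k - v j * v k =
              2 * ((u j + v j) / 2 * ((u k - v k) / 2) +
                (u j - v j) / 2 * ((u k + v k) / 2)) := by ring
          rw [key, abs_mul, abs_two]
          have := abs_add_le ((u j + v j) / 2 * ((u k - v k) / 2))
            ((u j - v j) / 2 * ((u k + v k) / 2))
          rw [abs_mul, abs_mul] at this
          linarith
      _ = 4 * (M * D) := by
          have expand : ∀ j : Fin (p+1),
              (∑ k : Fin (p+1), 2 * (|(u j + v j) / 2| * |(u k - v k) / 2| +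
                |(u j - v j) / 2| * |(u k + v k) / 2|))
              = 2 * (|(u j + v j) / 2| * D + |(u j - v j) / 2| * M) := by
            intro j
            rw [← Finset.mul_sum, Finset.sum_add_distrib, ← Finset.mul_sum,
              ← Finset.mul_sum, ← hM, ← hD]
          simp_rw [expand]
          rw [← Finset.mul_sum, Finset.sum_add_distrib, ← Finset.sum_mul,
            ← Finset.sum_mul, ← hM, ← hD]
          ring
  have hp : (0 : ℝ) ≤ (p : ℝ) := Nat.cast_nonneg p
  nlinarith [sq_nonneg (2 * (M - D) + (c - e)), sq_nonneg (c - e),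
    mul_nonneg (sub_nonneg.mpr hPQ) (by linarith : (0:ℝ) ≤ (p:ℝ) + 1 + (M + D)),
    mul_nonneg (add_nonneg hMnn hDnn) (sub_nonneg.mpr hce),
    mul_nonneg (sub_nonneg.mpr hce) (by linarith : (0:ℝ) ≤ 1 + (c + e))]


/-- L1-sensitivity of the clamped linear-regression summary statistic
`s̃ = ((1/n) x̃ᵀ ỹ, (1/n) ỹᵀ ỹ, (1/n) x̃ᵀ x̃)` with respect to changing one
subject's row is at most `(p² + 3p + 3) / n`. -/
theorem regression_summary_sensitivity (n p : ℕ) (hn : 0 < n)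
    (x x' : Fin n → Fin (p + 1) → ℝ) (y y' : Fin n → ℝ) (i₀ : Fin n)
    (hx1 : ∀ i, x i 0 = 1) (hx'1 : ∀ i, x' i 0 = 1)
    (hx : ∀ i j, x i j ∈ Set.Icc (-1 : ℝ) 1)
    (hx' : ∀ i j, x' i j ∈ Set.Icc (-1 : ℝ) 1)
    (hy : ∀ i, y i ∈ Set.Icc (-1 : ℝ) 1)
    (hy' : ∀ i, y' i ∈ Set.Icc (-1 : ℝ) 1)
    (hdiff : ∀ i, i ≠ i₀ → x i = x' i ∧ y i = y' i) :
    (∑ j : Fin (p + 1),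
        |(1 / n) * ∑ i, x i j * y i - (1 / n) * ∑ i, x' i j * y' i|) +
      |(1 / n) * ∑ i, (y i) ^ 2 - (1 / n) * ∑ i, (y' i) ^ 2| +
      (∑ j : Fin (p + 1), ∑ k : Fin (p + 1),
        |(1 / n) * ∑ i, x i j * x i k - (1 / n) * ∑ i, x' i j * x' i k|)
      ≤ ((p : ℝ) ^ 2 + 3 * p + 3) / n := by
  have hn' : (0 : ℝ) < n := by exact_mod_cast hn
  have hinv : (0 : ℝ) ≤ 1 / n := by positivity
  have key : ∀ f g : Fin n → ℝ, (∀ i, i ≠ i₀ → f i = g i) →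
      (∑ i, f i) - ∑ i, g i = f i₀ - g i₀ := by
    intro f g h
    rw [← Finset.sum_sub_distrib, Finset.sum_eq_single i₀]
    · intro i _ hi; rw [h i hi, sub_self]
    · intro h'; exact absurd (Finset.mem_univ i₀) h'
  have habs : ∀ f g : Fin n → ℝ, (∀ i, i ≠ i₀ → f i = g i) →
      |(1 / n : ℝ) * ∑ i, f i - (1 / n) * ∑ i, g i| = (1 / n) * |f i₀ - g i₀| := by
    intro f g h
    rw [← mul_sub, abs_mul, abs_of_nonneg hinv, key f g h]
  have e1 : ∀ j, |(1 / n : ℝ) * ∑ i, x i j * y i - (1 / n) * ∑ i, x' i j * y' i|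
      = (1 / n) * |x i₀ j * y i₀ - x' i₀ j * y' i₀| := fun j =>
    habs _ _ (fun i hi => by rw [(hdiff i hi).1, (hdiff i hi).2])
  have e2 : |(1 / n : ℝ) * ∑ i, (y i) ^ 2 - (1 / n) * ∑ i, (y' i) ^ 2|
      = (1 / n) * |(y i₀) ^ 2 - (y' i₀) ^ 2| :=
    habs _ _ (fun i hi => by rw [(hdiff i hi).2])
  have e3 : ∀ j k, |(1 / n : ℝ) * ∑ i, x i j * x i k - (1 / n) * ∑ i, x' i j * x' i k|
      = (1 / n) * |x i₀ j * x i₀ k - x' i₀ j * x' i₀ k| := fun j k =>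
    habs _ _ (fun i hi => by rw [(hdiff i hi).1])
  simp_rw [e1, e2, e3, ← Finset.mul_sum]
  have hb := row_bound p (x i₀) (x' i₀) (y i₀) (y' i₀)
    (fun j => abs_le.mpr ⟨(hx i₀ j).1, (hx i₀ j).2⟩)
    (fun j => abs_le.mpr ⟨(hx' i₀ j).1, (hx' i₀ j).2⟩)
    (abs_le.mpr ⟨(hy i₀).1, (hy i₀).2⟩)
    (abs_le.mpr ⟨(hy' i₀).1, (hy' i₀).2⟩)
  calc (1 / n : ℝ) * (∑ j, |x i₀ j * y i₀ - x' i₀ j * y' i₀|) +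
        (1 / n) * |(y i₀) ^ 2 - (y' i₀) ^ 2| +
        (1 / n) * ∑ j, ∑ k, |x i₀ j * x i₀ k - x' i₀ j * x' i₀ k|
      = (1 / n) * ((∑ j, |x i₀ j * y i₀ - x' i₀ j * y' i₀|) +
        |(y i₀) ^ 2 - (y' i₀) ^ 2| +
        ∑ j, ∑ k, |x i₀ j * x i₀ k - x' i₀ j * x' i₀ k|) := by ring
    _ ≤ (1 / n) * ((p : ℝ) ^ 2 + 3 * p + 3) := mul_le_mul_of_nonneg_left hb hinv
    _ = ((p : ℝ) ^ 2 + 3 * p + 3) / n := by rw [one_div, inv_mul_eq_div]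
end

section
/- In the setting of the binomial privatization mechanism for the SIR model, the probability ratio H = ((a+m)/(a'+m))^s · ((K-a+m)/(K-a'+m))^{n-s} with a' = a+1, 0 ≤ s ≤ n, 0 ≤ a ≤ K-1, and m ≥ 1 satisfies H ≤ ((1+m)/m)^n. Symmetrically, if a' = a-1 with 1 ≤ a ≤ K, the same bound holds. -/
/-- Bound on the binomial probability ratio factor `H` in the SIR privatization mechanism,
for both neighboring cases `a' = a + 1` and `a' = a - 1`. -/
theorem sir_ratio_factor_bound (K n m a s : ℕ)
    (hm : 1 ≤ m) (hs : s ≤ n) (haK : a ≤ K) :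
    (a + 1 ≤ K →
      (((a : ℝ) + m) / ((a : ℝ) + 1 + m)) ^ s *
        (((K : ℝ) - a + m) / ((K : ℝ) - (a + 1) + m)) ^ (n - s)
        ≤ ((1 + (m : ℝ)) / m) ^ n) ∧
    (1 ≤ a →
      (((a : ℝ) + m) / ((a : ℝ) - 1 + m)) ^ s *
        (((K : ℝ) - a + m) / ((K : ℝ) - ((a : ℝ) - 1) + m)) ^ (n - s)
        ≤ ((1 + (m : ℝ)) / m) ^ n) := by
  have hm' : (1 : ℝ) ≤ m := by exact_mod_cast hm
  have hmpos : (0 : ℝ) < m := lt_of_lt_of_le one_pos hm'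
  have ha0 : (0 : ℝ) ≤ a := Nat.cast_nonneg a
  have haK' : (a : ℝ) ≤ K := by exact_mod_cast haK
  have hc1 : (1 : ℝ) ≤ (1 + m) / m := by
    rw [le_div_iff₀ hmpos]; linarith
  have hc0 : (0 : ℝ) ≤ (1 + m) / m := le_trans zero_le_one hc1
  constructor
  · intro hK
    have hK' : (a : ℝ) + 1 ≤ K := by exact_mod_cast hK
    have hd1 : (0 : ℝ) < (a : ℝ) + 1 + m := by linarith
    have hd2 : (0 : ℝ) < (K : ℝ) - (a + 1) + m := by push_cast; linarith
    have h1 : (((a : ℝ) + m) / ((a : ℝ) + 1 + m)) ^ s ≤ 1 := by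
      apply pow_le_one₀
      · positivity
      · rw [div_le_one hd1]; linarith
    have hb2 : (0:ℝ) ≤ ((K : ℝ) - a + m) / ((K : ℝ) - (a + 1) + m) :=
      div_nonneg (by linarith) hd2.le
    have h2 : (((K : ℝ) - a + m) / ((K : ℝ) - (a + 1) + m)) ^ (n - s)
        ≤ ((1 + m) / m) ^ (n - s) := by
      apply pow_le_pow_left₀ hb2
      rw [div_le_div_iff₀ hd2 hmpos]
      push_cast
      nlinarith
    calc (((a : ℝ) + m) / ((a : ℝ) + 1 + m)) ^ s *
          (((K : ℝ) - a + m) / ((K : ℝ) - (a + 1) + m)) ^ (n - s)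
        ≤ 1 * ((1 + (m : ℝ)) / m) ^ (n - s) := by
          apply mul_le_mul h1 h2 (pow_nonneg hb2 _) zero_le_one
      _ = ((1 + (m : ℝ)) / m) ^ (n - s) := one_mul _
      _ ≤ ((1 + (m : ℝ)) / m) ^ n := pow_le_pow_right₀ hc1 (Nat.sub_le n s)
  · intro ha
    have ha' : (1 : ℝ) ≤ a := by exact_mod_cast ha
    have hd1 : (0 : ℝ) < (a : ℝ) - 1 + m := by linarith
    have hd2 : (0 : ℝ) < (K : ℝ) - ((a : ℝ) - 1) + m := by linarith
    have h1 : (((a : ℝ) + m) / ((a : ℝ) - 1 + m)) ^ s ≤ ((1 + m) / m) ^ s := by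
      apply pow_le_pow_left₀ (by positivity)
      rw [div_le_div_iff₀ hd1 hmpos]
      nlinarith
    have hb2 : (0:ℝ) ≤ ((K : ℝ) - a + m) / ((K : ℝ) - ((a : ℝ) - 1) + m) :=
      div_nonneg (by linarith) hd2.le
    have h2 : (((K : ℝ) - a + m) / ((K : ℝ) - ((a : ℝ) - 1) + m)) ^ (n - s) ≤ 1 := by
      apply pow_le_one₀
      · exact hb2
      · rw [div_le_one hd2]; linarith
    calc (((a : ℝ) + m) / ((a : ℝ) - 1 + m)) ^ s *
          (((K : ℝ) - a + m) / ((K : ℝ) - ((a : ℝ) - 1) + m)) ^ (n - s)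
        ≤ ((1 + (m : ℝ)) / m) ^ s * 1 := by
          apply mul_le_mul h1 h2 (pow_nonneg hb2 _) (by positivity)
      _ = ((1 + (m : ℝ)) / m) ^ s := mul_one _
      _ ≤ ((1 + (m : ℝ)) / m) ^ n := pow_le_pow_right₀ hc1 hs
end
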